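/- arXiv:1902.08774 — 3 statements merged into one kernel-verified Lean document; each statement's English description precedes it below -/
import Mathlib

section
/- Let n ≥ 1 and let v_1, …, v_{n−1}, w, w′ be nonzero vectors in ℝⁿ. Assume that w + w′ = ∑_{i∈I} v_i for some non-empty subset I ⊆ {1, …, n−1} with #I ≤ 2. Then conv_0(v_1, …, v_{n−1}, w) ∪ conv_0(v_1, …, v_{n−1}, w′) = conv_0(v_1, …, v_{n−1}, w, w′). -/
private lemma combo4 {E : Type*} [AddCommGroup E] [Module ℝ E] {K : Set E}
    (hK : Convex ℝ K) {p0 p1 p2 p3 : E} (h0 : p0 ∈ K) (h1 : p1 ∈ K) (h2 : p2 ∈ K)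
    (h3 : p3 ∈ K) {a0 a1 a2 a3 : ℝ} (ha0 : 0 ≤ a0) (ha1 : 0 ≤ a1) (ha2 : 0 ≤ a2)
    (ha3 : 0 ≤ a3) (hsum : a0 + a1 + a2 + a3 = 1) :
    a0 • p0 + a1 • p1 + a2 • p2 + a3 • p3 ∈ K := by
  have := hK.sum_mem (t := (Finset.univ : Finset (Fin 4)))
    (w := ![a0, a1, a2, a3]) (z := ![p0, p1, p2, p3])
    (by intro i _; fin_cases i <;> assumption)
    (by simp [Fin.sum_univ_four]; linarith)
    (by intro i _; fin_cases i <;> assumption)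
  simpa [Fin.sum_univ_four] using this

private lemma key {E : Type*} [AddCommGroup E] [Module ℝ E] {m : ℕ}
    (v : Fin m → E) (w w' : E) (I : Finset (Fin m)) (hI : I.Nonempty)
    (hIcard : I.card ≤ 2) (hsum : w + w' = ∑ i ∈ I, v i)
    {b c d : ℝ} (hb : 0 ≤ b) (hc : 0 ≤ c) (hd : 0 ≤ d) (hbcd : b + c + d = 1)
    (hcb : c ≤ b) {z : E} (hz : z ∈ convexHull ℝ (insert 0 (Set.range v))) :
    b • w + c • w' + d • z ∈ convexHull ℝ (insert 0 (insert w (Set.range v))) := by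
  set H := convexHull ℝ (insert 0 (insert w (Set.range v))) with hH
  have hconv : Convex ℝ H := convex_convexHull _ _
  have hzH : z ∈ H := by
    refine convexHull_mono ?_ hz
    exact Set.insert_subset_insert (Set.subset_insert _ _)
  have hwH : w ∈ H := subset_convexHull _ _ (by simp)
  have h0H : (0 : E) ∈ H := subset_convexHull _ _ (by simp)
  have hvH : ∀ i, v i ∈ H := fun i =>
    subset_convexHull _ _ (by simp)
  have hrw : b • w + c • w' + d • z = (b - c) • w + c • (w + w') + d • z := by
    module
  rw [hrw, hsum]
  have hcard : I.card = 1 ∨ I.card = 2 := by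
    have := hI.card_pos; omega
  rcases hcard with h1 | h2
  · obtain ⟨i, rfl⟩ := Finset.card_eq_one.mp h1
    rw [Finset.sum_singleton]
    have := combo4 hconv hwH (hvH i) hzH h0H (a0 := b - c) (a1 := c) (a2 := d) (a3 := c)
      (by linarith) hc hd hc (by linarith)
    simpa using this
  · obtain ⟨i, j, hij, rfl⟩ := Finset.card_eq_two.mp h2
    rw [Finset.sum_pair hij, smul_add]
    have := combo4 hconv hwH (hvH i) (hvH j) hzH (a0 := b - c) (a1 := c) (a2 := c)
      (a3 := d) (by linarith) hc hc hd (by linarith)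
    have e : (b - c) • w + c • v i + c • v j + d • z
        = (b - c) • w + (c • v i + c • v j) + d • z := by abel
    rwa [e] at this

/-- Lemma 2.11: the union of the two convex hulls equals the big convex hull. -/
theorem stmt_0 (n : ℕ) (hn : 1 ≤ n)
    (v : Fin (n - 1) → (Fin n → ℝ)) (w w' : Fin n → ℝ)
    (hv : ∀ i, v i ≠ 0) (hw : w ≠ 0) (hw' : w' ≠ 0)
    (I : Finset (Fin (n - 1))) (hI : I.Nonempty) (hIcard : I.card ≤ 2)
    (hsum : w + w' = ∑ i ∈ I, v i) :
    convexHull ℝ (insert 0 (insert w (Set.range v))) ∪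
      convexHull ℝ (insert 0 (insert w' (Set.range v))) =
      convexHull ℝ (insert 0 (insert w (insert w' (Set.range v)))) := by
  apply Set.Subset.antisymm
  · apply Set.union_subset
    · exact convexHull_mono (Set.insert_subset_insert
        (Set.insert_subset_insert (Set.subset_insert _ _)))
    · exact convexHull_mono (Set.insert_subset_insert (Set.subset_insert _ _))
  · intro x hx
    have hre : insert (0 : Fin n → ℝ) (insert w (insert w' (Set.range v)))
        = insert w (insert w' (insert 0 (Set.range v))) := by
      rw [Set.insert_comm 0 w, Set.insert_comm 0 w']
    rw [hre, convexHull_insert (by simp)] at hx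
    obtain ⟨z0, hz0, hx2⟩ := Set.mem_iUnion₂.mp hx
    obtain ⟨z', hz', hxseg⟩ := Set.mem_iUnion₂.mp hx2
    rw [Set.mem_singleton_iff] at hz0
    rw [hz0] at hxseg
    rw [convexHull_insert (by simp)] at hz'
    obtain ⟨z1, hz1, hz'2⟩ := Set.mem_iUnion₂.mp hz'
    obtain ⟨z, hz, hz'seg⟩ := Set.mem_iUnion₂.mp hz'2
    rw [Set.mem_singleton_iff] at hz1
    rw [hz1] at hz'seg
    obtain ⟨a, b2, ha, hb2, hab, hx⟩ := hxseg
    obtain ⟨g, d2, hg, hd2, hgd, hz'⟩ := hz'seg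
    have hxeq : x = a • w + (b2 * g) • w' + (b2 * d2) • z := by
      rw [← hx, ← hz']
      module
    rcases le_total (b2 * g) a with hle | hle
    · left
      rw [hxeq]
      exact key v w w' I hI hIcard hsum ha (by positivity) (by positivity)
        (by nlinarith) hle hz
    · right
      have hxeq' : x = (b2 * g) • w' + a • w + (b2 * d2) • z := by
        rw [hxeq]; abel
      rw [hxeq']
      exact key v w' w I hI hIcard (by rw [add_comm]; exact hsum) (by positivity) ha
        (by positivity) (by nlinarith) hle hz
end

section
/- Let n ≥ 1 and let v_1, …, v_{n−1}, w, w′ be nonzero vectors in ℝⁿ. Assume that w + w′ = ∑_{i∈I} v_i for some non-empty subset I ⊆ {1, …, n−1} with #I ≤ 2. Then the set conv_0(v_1, …, v_{n−1}, w) ∪ conv_0(v_1, …, v_{n−1}, w′) is convex. -/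
/-- A sub-convex combination of four points of a convex set containing `0` lies in the set. -/
lemma combo4_s1 {E : Type*} [AddCommGroup E] [Module ℝ E] {A : Set E} (hA : Convex ℝ A)
    (h0 : (0:E) ∈ A) {x y z u : E} (hx : x ∈ A) (hy : y ∈ A) (hz : z ∈ A) (hu : u ∈ A)
    {a b c d : ℝ} (ha : 0 ≤ a) (hb : 0 ≤ b) (hc : 0 ≤ c) (hd : 0 ≤ d)
    (habcd : a + b + c + d ≤ 1) : a • x + b • y + c • z + d • u ∈ A := by
  have h := hA.sum_mem (t := (Finset.univ : Finset (Fin 5)))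
      (w := ![a, b, c, d, 1 - (a + b + c + d)]) (z := ![x, y, z, u, 0])
      (fun i _ => by fin_cases i <;> simp [ha, hb, hc, hd] <;> linarith)
      (by simp [Fin.sum_univ_five])
      (fun i _ => by fin_cases i <;> simp [hx, hy, hz, hu, h0])
  simpa [Fin.sum_univ_five, add_assoc] using h

lemma aux' (n : ℕ) (v : Fin (n - 1) → (Fin n → ℝ)) (w w' : Fin n → ℝ)
    (I : Finset (Fin (n - 1))) (hI : I.Nonempty) (hIcard : I.card ≤ 2)
    (hsum : w + w' = ∑ i ∈ I, v i)
    (μ ν u u' s s' : ℝ) (a b : Fin n → ℝ)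
    (ha : a ∈ convexHull ℝ (insert 0 (Set.range v)))
    (hb : b ∈ convexHull ℝ (insert 0 (Set.range v)))
    (hμ : 0 ≤ μ) (hν : 0 ≤ ν) (hμν : μ + ν = 1)
    (hu : 0 ≤ u) (hu' : 0 ≤ u') (huu : u + u' = 1)
    (hs : 0 ≤ s) (hs' : 0 ≤ s') (hss : s + s' = 1)
    (hge : ν * s ≤ μ * u) :
    μ • (u • w + u' • a) + ν • (s • w' + s' • b) ∈
      convexHull ℝ (insert 0 (insert w (Set.range v))) := by
  set A := convexHull ℝ (insert 0 (insert w (Set.range v))) with hA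
  have hAconv : Convex ℝ A := convex_convexHull ℝ _
  have h0A : (0 : Fin n → ℝ) ∈ A := subset_convexHull ℝ _ (Set.mem_insert _ _)
  have hwA : w ∈ A := subset_convexHull ℝ _ (Set.mem_insert_of_mem _ (Set.mem_insert _ _))
  have hsub : convexHull ℝ (insert (0 : Fin n → ℝ) (Set.range v)) ⊆ A := by
    apply convexHull_mono
    intro x hx
    rcases hx with h | h
    · exact Or.inl h
    · exact Or.inr (Or.inr h)
  have haA : a ∈ A := hsub ha
  have hbA : b ∈ A := hsub hb
  have hIne : (I.card : ℝ) ≠ 0 := by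
    simp [Finset.card_ne_zero_of_mem hI.choose_spec]
  set m : Fin n → ℝ := (I.card : ℝ)⁻¹ • ∑ i ∈ I, v i with hm
  have hmA : m ∈ A := by
    rw [hm, Finset.smul_sum]
    apply hAconv.sum_mem
    · intro i _; positivity
    · rw [Finset.sum_const, nsmul_eq_mul, mul_inv_cancel₀ hIne]
    · intro i _
      exact subset_convexHull ℝ _ (Set.mem_insert_of_mem _
        (Set.mem_insert_of_mem _ ⟨i, rfl⟩))
  have key : μ • (u • w + u' • a) + ν • (s • w' + s' • b) =
      (μ * u - ν * s) • w + (μ * u') • a + (ν * s') • b + (ν * s * I.card) • m := by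
    rw [hm, smul_smul, mul_assoc, mul_inv_cancel₀ hIne, mul_one, ← hsum]
    module
  rw [key]
  apply combo4_s1 hAconv h0A hwA haA hbA hmA (by linarith) (by positivity) (by positivity)
    (by positivity)
  have hνs : 0 ≤ ν * s := by positivity
  have hcard : (I.card : ℝ) ≤ 2 := by exact_mod_cast hIcard
  nlinarith [mul_nonneg hμ hu']

lemma aux2 (n : ℕ) (v : Fin (n - 1) → (Fin n → ℝ)) (w w' : Fin n → ℝ)
    (I : Finset (Fin (n - 1))) (hI : I.Nonempty) (hIcard : I.card ≤ 2)
    (hsum : w + w' = ∑ i ∈ I, v i)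
    (p q : Fin n → ℝ)
    (hp : p ∈ convexHull ℝ (insert 0 (insert w (Set.range v))))
    (hq : q ∈ convexHull ℝ (insert 0 (insert w' (Set.range v))))
    (μ ν : ℝ) (hμ : 0 ≤ μ) (hν : 0 ≤ ν) (hμν : μ + ν = 1) :
    μ • p + ν • q ∈ convexHull ℝ (insert 0 (insert w (Set.range v))) ∪
      convexHull ℝ (insert 0 (insert w' (Set.range v))) := by
  have hne : (insert (0 : Fin n → ℝ) (Set.range v)).Nonempty := ⟨0, Set.mem_insert _ _⟩
  rw [Set.insert_comm, convexHull_insert hne, mem_convexJoin] at hp hq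
  obtain ⟨x, hx, a, ha, ⟨u, u', hu, hu', huu, hpw⟩⟩ := hp
  obtain ⟨y, hy, b, hb, ⟨s, s', hs, hs', hss, hqw⟩⟩ := hq
  rw [Set.mem_singleton_iff] at hx hy
  rw [hx] at hpw
  rw [hy] at hqw
  rcases le_total (ν * s) (μ * u) with h | h
  · left
    rw [← hpw, ← hqw]
    exact aux' n v w w' I hI hIcard hsum μ ν u u' s s' a b ha hb hμ hν hμν hu hu' huu
      hs hs' hss h
  · right
    rw [← hpw, ← hqw, add_comm]
    exact aux' n v w' w I hI hIcard (by rw [add_comm]; exact hsum) ν μ s s' u u' b a hb ha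
      hν hμ (by linarith) hs hs' hss hu hu' huu h

/-- Lemma 2.11 (convexity conclusion): the union of the two convex hulls is convex. -/
theorem stmt_1 (n : ℕ) (hn : 1 ≤ n)
    (v : Fin (n - 1) → (Fin n → ℝ)) (w w' : Fin n → ℝ)
    (hv : ∀ i, v i ≠ 0) (hw : w ≠ 0) (hw' : w' ≠ 0)
    (I : Finset (Fin (n - 1))) (hI : I.Nonempty) (hIcard : I.card ≤ 2)
    (hsum : w + w' = ∑ i ∈ I, v i) :
    Convex ℝ (convexHull ℝ (insert 0 (insert w (Set.range v))) ∪
      convexHull ℝ (insert 0 (insert w' (Set.range v)))) := by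
  intro p hp q hq μ ν hμ hν hμν
  rcases hp with hp | hp <;> rcases hq with hq | hq
  · exact Or.inl ((convex_convexHull ℝ _) hp hq hμ hν hμν)
  · exact aux2 n v w w' I hI hIcard hsum p q hp hq μ ν hμ hν hμν
  · rw [Set.union_comm]
    exact aux2 n v w' w I hI hIcard (by rw [add_comm]; exact hsum) p q hp hq μ ν hμ hν hμν
  · exact Or.inr ((convex_convexHull ℝ _) hp hq hμ hν hμν)
end

section
/- For every integer n ≥ 0, the following identity of polynomials holds in ℤ[x]: ∑_{j=0}^{n} ((n+j)!/(j!·j!·(n−j)!))·(x−1)^{n−j} = ∑_{j=0}^{n} (C(n,j))²·x^{n−j}, where C(n,j) denotes the binomial coefficient n choose j. -/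
/-!
Reindexing by `k = n - j`, write `X^k = ((X - 1) + 1)^k` on the right and expand binomially.
The coefficient of `(X - 1)^i` becomes `∑ₖ C(n,k)² C(k,i) = C(n,i) ∑ₖ C(n-i,k-i) C(n,n-k)`,
which Vandermonde's identity turns into `C(n,i) C(2n-i,n-i) = (2n-i)! / (i! (n-i)!²)`,
the coefficient on the left.
-/

open Polynomial Finset
open scoped Nat

theorem Nat.factorial_add_div_eq_choose_mul_choose {n j : ℕ} (h : j ≤ n) :
    (n + j)! / (j ! * j ! * (n - j)!) = (n + j).choose j * n.choose j := by
  refine Nat.div_eq_of_eq_mul_left (by positivity) ?_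
  rw [← Nat.choose_mul_factorial_mul_factorial (Nat.le_add_left j n), Nat.add_sub_cancel,
    ← Nat.choose_mul_factorial_mul_factorial h]
  ring

theorem Nat.sum_Ico_choose_sq_mul_choose {n i : ℕ} (hi : i ≤ n) :
    ∑ k ∈ Ico i (n + 1), n.choose k ^ 2 * k.choose i =
      (n + (n - i)).choose (n - i) * n.choose (n - i) := by
  have hterm : ∀ p ∈ range (n - i + 1), n.choose (i + p) ^ 2 * (i + p).choose i =
      n.choose i * ((n - i).choose p * n.choose (n - i - p)) := by
    intro p hp
    have hip : i + p ≤ n := by grind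
    rw [sq, mul_assoc, Nat.choose_mul (Nat.le_add_right i p), Nat.add_sub_cancel_left,
      ← Nat.choose_symm hip, show n - (i + p) = n - i - p by omega]
    ring
  rw [sum_Ico_eq_sum_range, show n + 1 - i = n - i + 1 by omega, sum_congr rfl hterm,
    ← mul_sum, add_comm n, Nat.add_choose_eq, Nat.sum_antidiagonal_eq_sum_range_succ_mk,
    Nat.choose_symm hi, mul_comm]

theorem sum_choose_sq_mul_add_one_pow {R : Type*} [CommSemiring R] (n : ℕ) (y : R) :
    ∑ k ∈ range (n + 1), (n.choose k ^ 2 : R) * (y + 1) ^ k =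
      ∑ i ∈ range (n + 1),
        (((n + (n - i)).choose (n - i) * n.choose (n - i) : ℕ) : R) * y ^ i := by
  calc ∑ k ∈ range (n + 1), (n.choose k ^ 2 : R) * (y + 1) ^ k
      = ∑ k ∈ range (n + 1), ∑ i ∈ range (k + 1),
          ((n.choose k ^ 2 * k.choose i : ℕ) : R) * y ^ i := by
        refine sum_congr rfl fun k _ => ?_
        rw [add_pow, mul_sum]
        refine sum_congr rfl fun i _ => ?_
        push_cast
        ring
    _ = ∑ i ∈ range (n + 1), ∑ k ∈ Ico i (n + 1),
          ((n.choose k ^ 2 * k.choose i : ℕ) : R) * y ^ i := by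
        simp only [range_eq_Ico]
        exact (sum_Ico_Ico_comm 0 (n + 1) fun i k =>
          ((n.choose k ^ 2 * k.choose i : ℕ) : R) * y ^ i).symm
    _ = _ := by
        refine sum_congr rfl fun i hi => ?_
        rw [← sum_mul, ← Nat.cast_sum, Nat.sum_Ico_choose_sq_mul_choose (by grind)]

/-- The f-polynomial evaluated at x−1 equals the h-polynomial: the identity
∑_j ((n+j)!/(j!·j!·(n−j)!))·(x−1)^{n−j} = ∑_j C(n,j)²·x^{n−j} in ℤ[x]. -/
theorem stmt_3 (n : ℕ) :
    ∑ j ∈ Finset.range (n + 1),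
        (C ((((n + j).factorial / (j.factorial * j.factorial * (n - j).factorial) : ℕ) : ℤ)) *
          (X - 1) ^ (n - j)) =
      ∑ j ∈ Finset.range (n + 1), C ((n.choose j : ℤ) ^ 2) * X ^ (n - j) := by
  rw [← sum_range_reflect,
    ← sum_range_reflect (fun j => C ((n.choose j : ℤ) ^ 2) * X ^ (n - j))]
  have hexpand := sum_choose_sq_mul_add_one_pow n (X - 1 : ℤ[X])
  rw [sub_add_cancel] at hexpand
  simp only [Nat.add_sub_cancel]
  calc _ = ∑ k ∈ range (n + 1),
        (((n + (n - k)).choose (n - k) * n.choose (n - k) : ℕ) : ℤ[X]) * (X - 1) ^ k := by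
        refine sum_congr rfl fun k hk => ?_
        rw [Nat.factorial_add_div_eq_choose_mul_choose (Nat.sub_le n k),
          Nat.sub_sub_self (by grind)]
        simp
    _ = _ := hexpand.symm
    _ = _ := by
        refine sum_congr rfl fun k hk => ?_
        rw [Nat.sub_sub_self (by grind), Nat.choose_symm (by grind)]
        simp
end
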